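/- Fix k ≥ 1 and suppose 0 < s_k ≤ s_{k+1} and s_{k+1} ≤ 2/L̃_{k+1}. Then V_k − V_{k+1} ≥ 2·A_k·q_{k+1} + (s_{k+1}/2)·θ_{k+1}·r_{k+1}, where q_{k+1} = (2θ_k h)^{−β}·(F(X_k) − F*) + (1/2)·⟨X̄_k, L̃X̄_k⟩ − (2θ_{k+1}h)^{−β}·(F(X_{k+1}) − F*) − (1/2)·⟨X̄_{k+1}, L̃X̄_{k+1}⟩ − ⟨G_{k+1}(X_{k+1}), X_k − X_{k+1}⟩ − (s_{k+1}/4)·‖G_k(X_k)‖² − (s_{k+1}/4)·‖G_{k+1}(X_{k+1})‖² + (s_k/2)·⟨G_{k+1}(X_{k+1}), G_k(X_k)⟩, with X̄_j = X_j − X*. -/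

import Mathlib

/-!
Write `φ_j = (2θ_j h)^{-β}` and `E_j(x) = φ_j (F x - F*) + ½ ⟪x - X*, L̃ (x - X*)⟫`, so that
`G_j = ∇E_j` and `E_j` is convex with `(φ_j L_f + λ̄)`-Lipschitz gradient vanishing at `X*`.

Expanding `‖Z_{k+2} - X*‖²` by the `Z`-update, and using the `X`-update in the form
`θ_{k+1} Z_{k+1} = (A_k + θ_{k+1}) X_{k+1} - A_k X_k + (A_k s_k / 2) G_k`, writes
`V_k - V_{k+1} - 2 A_k q_{k+1}` exactly as two terms that are nonnegative because
`s_k ≤ s_{k+1}`, plus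
`2θ_{k+1} ⟪G_{k+1}, X_{k+1} - X*⟫ - 2 (A_{k+1} - A_k) E_{k+1}(X_{k+1})
  + ((A_k + A_{k+1})/2 - θ_{k+1}²) s_{k+1} ‖G_{k+1}‖²`.
For a convex function with `C`-Lipschitz gradient and minimiser `x₀`, comparing the supporting
hyperplane at `x` with the descent bound at `x₀` gives
`f x - f x₀ + ‖∇f x‖² / (4C) ≤ ⟪∇f x, x - x₀⟫`; with `s_{k+1} ≤ 2 / L̃_{k+1}` this bounds the last
group below by `(θ_{k+1}/4 + (A_k + A_{k+1})/2 - θ_{k+1}²) s_{k+1} ‖G_{k+1}‖² ≥ 0`, using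
`A_{k+1} - A_k ≤ θ_{k+1}`. Finally `r_{k+1} = 0`, since `∇F(X*) = 0`.
-/

open scoped RealInnerProductSpace

noncomputable section

/-- `θ_k = k/2`. -/
def thetaSeq (k : ℕ) : ℝ := (k : ℝ) / 2

/-- `c_k = θ_{k+1} / (θ_{k+1}² − θ_k²)`. -/
def cSeq (k : ℕ) : ℝ := thetaSeq (k + 1) / (thetaSeq (k + 1) ^ 2 - thetaSeq k ^ 2)

/-- `A_k = c_k · θ_k²`. -/
def ASeq (k : ℕ) : ℝ := cSeq k * thetaSeq k ^ 2

variable {H : Type*} [NormedAddCommGroup H] [InnerProductSpace ℝ H] [FiniteDimensional ℝ H]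

/-- `G_k(Y) = (2θ_k h)^{−β} ∇F(Y) + L̃Y`. -/
def Gmap (h β : ℝ) (F : H → ℝ) (L : H →L[ℝ] H) (k : ℕ) (Y : H) : H :=
  ((2 * thetaSeq k * h) ^ (-β)) • gradient F Y + L Y

/-- `L̃_k = 2·max{λ̄, (kh)^{−β}·L_f}`. -/
def LSmooth (lambar Lf h β : ℝ) (k : ℕ) : ℝ :=
  2 * max lambar (((k : ℝ) * h) ^ (-β) * Lf)

/-- Lyapunov function `V_k` (for `k ≥ 1`). -/
def VSeq (h β : ℝ) (F : H → ℝ) (L : H →L[ℝ] H) (Xs : H) (X Z : ℕ → H) (s : ℕ → ℝ)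
    (k : ℕ) : ℝ :=
  2 * ASeq k * (((2 * thetaSeq k * h) ^ (-β)) * (F (X k) - F Xs)
      + (1 / 2) * ⟪X k - Xs, L (X k - Xs)⟫
      - (s k / 4) * ‖Gmap h β F L k (X k)‖ ^ 2)
    + (1 / s k) * ‖Z (k + 1) - Xs‖ ^ 2

/-- `a_{k+1}` (indexed so that `aSeq … k = a_{k+1}`). -/
def aSeq (h β : ℝ) (F : H → ℝ) (L : H →L[ℝ] H) (Xs : H) (X : ℕ → H) (k : ℕ) : ℝ :=
  ((2 * thetaSeq k * h) ^ (-β)) * (F (X k) - F Xs)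
    + (1 / 2) * ⟪X k - Xs, L (X k - Xs)⟫
    - ((2 * thetaSeq (k + 1) * h) ^ (-β)) * (F (X (k + 1)) - F Xs)
    - (1 / 2) * ⟪X (k + 1) - Xs, L (X (k + 1) - Xs)⟫
    - ⟪Gmap h β F L (k + 1) (X (k + 1)), X k - X (k + 1)⟫

/-- `b_{k+1}` (indexed so that `bSeq … k = b_{k+1}`). -/
def bSeq (h β : ℝ) (F : H → ℝ) (L : H →L[ℝ] H) (X : ℕ → H) (k : ℕ) : ℝ :=
  ‖Gmap h β F L k (X k) - Gmap h β F L (k + 1) (X (k + 1))‖ ^ 2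

/-- `ã_{k+1}` (indexed so that `atilSeq … k = ã_{k+1}`). -/
def atilSeq (h β : ℝ) (F : H → ℝ) (L : H →L[ℝ] H) (Xs : H) (X : ℕ → H) (s : ℕ → ℝ)
    (k : ℕ) : ℝ :=
  aSeq h β F L Xs X k
    + (s k / 2) * ⟪Gmap h β F L (k + 1) (X (k + 1)), Gmap h β F L k (X k)⟫

/-- `b̃_{k+1}` (indexed so that `btilSeq … k = b̃_{k+1}`). -/
def btilSeq (h β : ℝ) (F : H → ℝ) (L : H →L[ℝ] H) (X : ℕ → H) (k : ℕ) : ℝ :=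
  ‖Gmap h β F L k (X k)‖ ^ 2 + ‖Gmap h β F L (k + 1) (X (k + 1))‖ ^ 2

/-- `w_{k+1}` (indexed so that `wSeq … k = w_{k+1}`). -/
def wSeq (h β : ℝ) (F : H → ℝ) (L : H →L[ℝ] H) (X : ℕ → H) (k : ℕ) : ℝ :=
  ⟪Gmap h β F L (k + 1) (X (k + 1)), Gmap h β F L k (X k)⟫

/-- `r_{k+1}` (indexed so that `rSeq … k = r_{k+1}`). -/
def rSeq (h β : ℝ) (F : H → ℝ) (L : H →L[ℝ] H) (Xs : H) (X : ℕ → H) (k : ℕ) : ℝ :=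
  -‖((2 * thetaSeq (k + 1) * h) ^ (-β)) • gradient F Xs‖ ^ 2
    + 2 * ⟪((2 * thetaSeq (k + 1) * h) ^ (-β)) • gradient F Xs,
        ((2 * thetaSeq (k + 1) * h) ^ (-β)) • gradient F Xs
          - Gmap h β F L (k + 1) (X (k + 1))⟫

/-- `q_{k+1}` (indexed so that `qSeq … k = q_{k+1}`). -/
def qSeq (h β : ℝ) (F : H → ℝ) (L : H →L[ℝ] H) (Xs : H) (X : ℕ → H) (s : ℕ → ℝ)
    (k : ℕ) : ℝ :=
  aSeq h β F L Xs X k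
    - (s (k + 1) / 4) * ‖Gmap h β F L k (X k)‖ ^ 2
    - (s (k + 1) / 4) * ‖Gmap h β F L (k + 1) (X (k + 1))‖ ^ 2
    + (s k / 2) * ⟪Gmap h β F L (k + 1) (X (k + 1)), Gmap h β F L k (X k)⟫

section ConvexSmooth

open InnerProductSpace

variable {E : Type*} [NormedAddCommGroup E] [InnerProductSpace ℝ E]

theorem ContinuousLinearMap.IsPositive.convexOn_inner_sub_apply {T : E →L[ℝ] E}
    (hT : T.IsPositive) (a : E) : ConvexOn ℝ Set.univ fun x => ⟪x - a, T (x - a)⟫ := by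
  refine ⟨convex_univ, fun x _ y _ μ ν hμ hν hμν => ?_⟩
  have hexpand : μ * ⟪x - a, T (x - a)⟫ + ν * ⟪y - a, T (y - a)⟫
      - ⟪μ • x + ν • y - a, T (μ • x + ν • y - a)⟫ = μ * ν * ⟪x - y, T (x - y)⟫ := by
    obtain rfl : ν = 1 - μ := by linarith
    simp only [map_sub, map_add, map_smul, inner_sub_left, inner_sub_right, inner_add_left,
      inner_add_right, real_inner_smul_left, real_inner_smul_right]
    ring
  have := mul_nonneg (mul_nonneg hμ hν) (hT.inner_nonneg_right (x - y))
  simp only [smul_eq_mul]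
  linarith

def penalizedGap (φ : ℝ) (F : E → ℝ) (T : E →L[ℝ] E) (a x : E) : ℝ :=
  φ * (F x - F a) + 1 / 2 * ⟪x - a, T (x - a)⟫

variable {φ Lf : ℝ} {F : E → ℝ} {T : E →L[ℝ] E} {a : E}

theorem penalizedGap_nonneg (hφ : 0 ≤ φ) (hmin : ∀ y, F a ≤ F y) (hT : T.IsPositive) (x : E) :
    0 ≤ penalizedGap φ F T a x := by
  have := hT.inner_nonneg_right (x - a)
  have := mul_nonneg hφ (sub_nonneg.mpr (hmin x))
  unfold penalizedGap
  linarith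

variable [CompleteSpace E]

theorem ConvexOn.add_inner_le_of_hasGradientAt {f : E → ℝ} {g x : E}
    (hconv : ConvexOn ℝ Set.univ f) (hf : HasGradientAt f g x) (y : E) :
    f x + ⟪g, y - x⟫ ≤ f y := by
  have hline : HasDerivAt (fun t : ℝ => f (AffineMap.lineMap x y t)) ⟪g, y - x⟫ 0 := by
    have hcurve : HasDerivAt (fun t : ℝ => AffineMap.lineMap x y t) (y - x) 0 := by
      simpa using AffineMap.hasDerivAt_lineMap (a := x) (b := y) (x := (0 : ℝ))
    have hf0 : HasFDerivAt f (toDual ℝ E g) (AffineMap.lineMap x y (0 : ℝ)) := by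
      simpa using hf.hasFDerivAt
    exact hf0.comp_hasDerivAt (0 : ℝ) hcurve
  have hslope := (hconv.comp_affineMap (AffineMap.lineMap x y)).le_slope_of_hasDerivAt
    (Set.mem_univ 0) (Set.mem_univ 1) zero_lt_one hline
  simp only [slope_def_field, Function.comp_apply, AffineMap.lineMap_apply_one,
    AffineMap.lineMap_apply_zero, sub_zero, div_one] at hslope
  linarith

theorem le_add_inner_add_mul_norm_sq_of_lipschitz {f : E → ℝ} {f' : E → E} {C : ℝ}
    (hC : 0 ≤ C) (hf : ∀ x, HasGradientAt f (f' x) x)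
    (hlip : ∀ x y, ‖f' x - f' y‖ ≤ C * ‖x - y‖) (y d : E) :
    f (y + d) ≤ f y + ⟪f' y, d⟫ + C * ‖d‖ ^ 2 := by
  set φ : E → ℝ := fun z => f z - ⟪f' y, z⟫
  have hφ : ∀ z, HasFDerivAt φ (toDual ℝ E (f' z - f' y)) z := fun z => by
    rw [map_sub]
    exact (hf z).hasFDerivAt.sub (toDual ℝ E (f' y)).hasFDerivAt
  have hbound : ∀ z ∈ Metric.closedBall y ‖d‖, ‖toDual ℝ E (f' z - f' y)‖ ≤ C * ‖d‖ :=
    fun z hz => by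
      rw [LinearIsometryEquiv.norm_map]
      exact (hlip z y).trans (mul_le_mul_of_nonneg_left (mem_closedBall_iff_norm.mp hz) hC)
  have hmvt := (convex_closedBall y ‖d‖).norm_image_sub_le_of_norm_hasFDerivWithin_le
    (fun z _ => (hφ z).hasFDerivWithinAt) hbound (Metric.mem_closedBall_self (norm_nonneg d))
    (y := y + d) (by simp)
  simp only [φ, add_sub_cancel_left, inner_add_right, Real.norm_eq_abs] at hmvt
  nlinarith [le_abs_self (f (y + d) - (⟪f' y, y⟫ + ⟪f' y, d⟫) - (f y - ⟪f' y, y⟫))]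

theorem ConvexOn.sub_add_norm_sq_div_le_inner {f : E → ℝ} {f' : E → E} {C : ℝ} (hC : 0 ≤ C)
    (hconv : ConvexOn ℝ Set.univ f) (hf : ∀ x, HasGradientAt f (f' x) x)
    (hlip : ∀ x y, ‖f' x - f' y‖ ≤ C * ‖x - y‖) {x₀ : E} (hx₀ : f' x₀ = 0) (x : E) :
    f x - f x₀ + ‖f' x‖ ^ 2 / (4 * C) ≤ ⟪f' x, x - x₀⟫ := by
  -- compare the supporting hyperplane at `x` with the descent bound at `x₀`, one step along `f' x`
  set d := (2 * C)⁻¹ • f' x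
  have hsupp := hconv.add_inner_le_of_hasGradientAt (hf x) (x₀ + d)
  have hdesc := le_add_inner_add_mul_norm_sq_of_lipschitz hC hf hlip x₀ d
  have hstep : ⟪f' x, d⟫ - C * ‖d‖ ^ 2 = ‖f' x‖ ^ 2 / (4 * C) := by
    rcases hC.eq_or_lt with rfl | hC
    · simp [d]
    · simp only [d, real_inner_smul_right, real_inner_self_eq_norm_sq, norm_smul, mul_pow,
        Real.norm_eq_abs, sq_abs]
      field_simp
      ring
  rw [hx₀, inner_zero_left, add_zero] at hdesc
  rw [show x₀ + d - x = d - (x - x₀) by abel, inner_sub_right] at hsupp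
  linarith

theorem hasGradientAt_half_inner_sub_apply {T : E →L[ℝ] E} (hT : (T : E →ₗ[ℝ] E).IsSymmetric)
    (a x : E) : HasGradientAt (fun y => 1 / 2 * ⟪y - a, T (y - a)⟫) (T (x - a)) x := by
  have hsub := (hasFDerivAt_id (𝕜 := ℝ) x).sub_const a
  rw [hasGradientAt_iff_hasFDerivAt]
  refine ((hsub.inner ℝ (T.hasFDerivAt.comp x hsub)).const_mul (1 / 2 : ℝ)).congr_fderiv ?_
  ext v
  have hsymm : ⟪x - a, T v⟫ = ⟪T x, v⟫ - ⟪T a, v⟫ := by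
    rw [← inner_sub_left, ← map_sub]
    exact (hT (x - a) v).symm
  have hcomm : ⟪v, T x - T a⟫ = ⟪T x, v⟫ - ⟪T a, v⟫ := by rw [real_inner_comm, inner_sub_left]
  simp only [one_div, id_eq, Function.comp_apply, map_sub, ContinuousLinearMap.comp_id,
    smul_apply, ContinuousLinearMap.comp_apply, ContinuousLinearMap.prod_apply,
    ContinuousLinearMap.id_apply, fderivInnerCLM_apply, hsymm, hcomm, smul_eq_mul,
    sub_apply, toDual_apply_apply]
  ring

theorem penalizedGap_add_norm_sq_div_le_inner (hφ : 0 ≤ φ) (hF : Differentiable ℝ F)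
    (hconv : ConvexOn ℝ Set.univ F) (hLf : 0 ≤ Lf)
    (hlip : ∀ x y, ‖gradient F x - gradient F y‖ ≤ Lf * ‖x - y‖) (hT : T.IsPositive)
    (ha : gradient F a = 0) (x : E) :
    penalizedGap φ F T a x + ‖φ • gradient F x + T (x - a)‖ ^ 2 / (4 * (φ * Lf + ‖T‖))
      ≤ ⟪φ • gradient F x + T (x - a), x - a⟫ := by
  have hconvΦ : ConvexOn ℝ Set.univ (penalizedGap φ F T a) := by
    have hsplit : penalizedGap φ F T a
        = fun x => φ • (F x + -F a) + (1 / 2 : ℝ) • ⟪x - a, T (x - a)⟫ := by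
      ext x
      simp only [penalizedGap, smul_eq_mul, sub_eq_add_neg]
    rw [hsplit]
    exact ((hconv.add_const (-F a)).smul hφ).add
      ((hT.convexOn_inner_sub_apply a).smul (by norm_num))
  have hgradΦ : ∀ x, HasGradientAt (penalizedGap φ F T a) (φ • gradient F x + T (x - a)) x := by
    intro x
    have hquad := (hasGradientAt_half_inner_sub_apply hT.isSymmetric a x).hasFDerivAt
    rw [hasGradientAt_iff_hasFDerivAt, map_add, map_smul, toDual_gradient]
    exact (((hF x).hasFDerivAt.sub_const (F a)).const_mul φ).add hquad
  have hlipΦ : ∀ x y, ‖(φ • gradient F x + T (x - a)) - (φ • gradient F y + T (y - a))‖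
      ≤ (φ * Lf + ‖T‖) * ‖x - y‖ := by
    intro x y
    calc ‖(φ • gradient F x + T (x - a)) - (φ • gradient F y + T (y - a))‖
        = ‖φ • (gradient F x - gradient F y) + T (x - y)‖ := by
          congr 1
          simp only [smul_sub, map_sub]
          abel
      _ ≤ φ * (Lf * ‖x - y‖) + ‖T‖ * ‖x - y‖ := by
          grw [norm_add_le, norm_smul, Real.norm_of_nonneg hφ, hlip, T.le_opNorm]
      _ = (φ * Lf + ‖T‖) * ‖x - y‖ := by ring
  simpa [penalizedGap] using
    hconvΦ.sub_add_norm_sq_div_le_inner (by positivity) hgradΦ hlipΦ (x₀ := a) (by simp [ha]) x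

end ConvexSmooth

theorem cSeq_eq (k : ℕ) : cSeq k = 2 * (k + 1) / (2 * k + 1) := by
  rw [cSeq, thetaSeq, thetaSeq, Nat.cast_succ,
    show (((k : ℝ) + 1) / 2) ^ 2 - ((k : ℝ) / 2) ^ 2 = (2 * k + 1) / 4 by ring]
  field_simp
  ring

theorem ASeq_eq (k : ℕ) : ASeq k = (k : ℝ) ^ 2 * (k + 1) / (2 * (2 * k + 1)) := by
  rw [ASeq, cSeq_eq, thetaSeq]
  field_simp

theorem ASeq_nonneg (k : ℕ) : 0 ≤ ASeq k := by
  rw [ASeq_eq]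
  positivity

theorem ASeq_succ_sub_le_thetaSeq (k : ℕ) : ASeq (k + 1) - ASeq k ≤ thetaSeq (k + 1) := by
  rw [ASeq_eq, ASeq_eq, thetaSeq, ← sub_nonneg]
  push_cast
  have hgap : ((k : ℝ) + 1) / 2 - (((k : ℝ) + 1) ^ 2 * (k + 1 + 1) / (2 * (2 * (k + 1) + 1))
      - (k : ℝ) ^ 2 * (k + 1) / (2 * (2 * k + 1)))
      = (k + 1) ^ 2 / (2 * (2 * k + 1) * (2 * k + 3)) := by
    field_simp
    ring
  rw [hgap]
  positivity

theorem thetaSeq_sq_le (k : ℕ) :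
    thetaSeq (k + 1) ^ 2 ≤ thetaSeq (k + 1) / 4 + (ASeq k + ASeq (k + 1)) / 2 := by
  rw [ASeq_eq, ASeq_eq, thetaSeq]
  push_cast
  rw [← sub_nonneg]
  have hgap : ((k : ℝ) + 1) / 2 / 4 + ((k : ℝ) ^ 2 * (k + 1) / (2 * (2 * k + 1))
      + ((k : ℝ) + 1) ^ 2 * (k + 1 + 1) / (2 * (2 * (k + 1) + 1))) / 2 - (((k : ℝ) + 1) / 2) ^ 2
      = (k + 1) / (8 * (2 * k + 1) * (2 * k + 3)) := by
    field_simp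
    ring
  rw [hgap]
  positivity

theorem thetaSeq_succ_smul_eq {E : Type*} [AddCommGroup E] [Module ℝ E] {x x' z g : E} {s : ℝ}
    (k : ℕ) (hx : x' = (thetaSeq k ^ 2 / thetaSeq (k + 1) ^ 2) • (x - (s / 2) • g)
      + (1 - thetaSeq k ^ 2 / thetaSeq (k + 1) ^ 2) • z) :
    thetaSeq (k + 1) • z
      = (ASeq k + thetaSeq (k + 1)) • x' - ASeq k • x + (ASeq k * s / 2) • g := by
  rw [hx]
  match_scalars <;> simp only [ASeq, cSeq_eq, thetaSeq] <;> push_cast <;> field_simp <;> ring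

theorem add_le_LSmooth (lambar Lf h β : ℝ) (k : ℕ) :
    (2 * thetaSeq k * h) ^ (-β) * Lf + lambar ≤ LSmooth lambar Lf h β k := by
  rw [LSmooth, show 2 * thetaSeq k * h = k * h by rw [thetaSeq]; ring]
  linarith [le_max_left lambar ((k * h) ^ (-β) * Lf), le_max_right lambar ((k * h) ^ (-β) * Lf)]

section Lyapunov

variable {h β : ℝ} {F : H → ℝ} {L : H →L[ℝ] H} {Xs : H} {X Z : ℕ → H} {s : ℕ → ℝ} {k : ℕ}

theorem VSeq_sub_VSeq_succ (hs : s (k + 1) ≠ 0)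
    (hZ : Z (k + 1 + 1)
      = Z (k + 1) - (s (k + 1) * thetaSeq (k + 1)) • Gmap h β F L (k + 1) (X (k + 1)))
    (hX : X (k + 1)
      = (thetaSeq k ^ 2 / thetaSeq (k + 1) ^ 2) • (X k - (s k / 2) • Gmap h β F L k (X k))
        + (1 - thetaSeq k ^ 2 / thetaSeq (k + 1) ^ 2) • Z (k + 1)) :
    VSeq h β F L Xs X Z s k - VSeq h β F L Xs X Z s (k + 1)
      = 2 * ASeq k * qSeq h β F L Xs X s k
        + (1 / s k - 1 / s (k + 1)) * ‖Z (k + 1) - Xs‖ ^ 2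
        + ASeq k * (s (k + 1) - s k) / 2 * ‖Gmap h β F L k (X k)‖ ^ 2
        + ((ASeq k + ASeq (k + 1)) / 2 - thetaSeq (k + 1) ^ 2) * s (k + 1)
          * ‖Gmap h β F L (k + 1) (X (k + 1))‖ ^ 2
        + 2 * thetaSeq (k + 1) * ⟪Gmap h β F L (k + 1) (X (k + 1)), X (k + 1) - Xs⟫
        - 2 * (ASeq (k + 1) - ASeq k)
          * penalizedGap ((2 * thetaSeq (k + 1) * h) ^ (-β)) F L Xs (X (k + 1)) := by
  set g := Gmap h β F L k (X k)
  set g' := Gmap h β F L (k + 1) (X (k + 1))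
  have hZnorm : 1 / s (k + 1) * ‖Z (k + 1 + 1) - Xs‖ ^ 2
      = 1 / s (k + 1) * ‖Z (k + 1) - Xs‖ ^ 2 - 2 * thetaSeq (k + 1) * ⟪g', Z (k + 1) - Xs⟫
        + s (k + 1) * thetaSeq (k + 1) ^ 2 * ‖g'‖ ^ 2 := by
    rw [hZ, sub_right_comm, norm_sub_sq_real, real_inner_smul_right, norm_smul, mul_pow,
      Real.norm_eq_abs, sq_abs, real_inner_comm]
    field_simp
  have hZX : thetaSeq (k + 1) * ⟪g', Z (k + 1)⟫ = (ASeq k + thetaSeq (k + 1)) * ⟪g', X (k + 1)⟫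
      - ASeq k * ⟪g', X k⟫ + ASeq k * s k / 2 * ⟪g', g⟫ := by
    simpa only [inner_add_right, inner_sub_right, real_inner_smul_right]
      using congrArg (⟪g', ·⟫) (thetaSeq_succ_smul_eq k hX)
  rw [inner_sub_right] at hZnorm
  simp only [VSeq, qSeq, aSeq, penalizedGap, inner_sub_right]
  linear_combination -hZnorm + 2 * hZX

theorem penalizedGap_add_le_inner_Gmap {Lf σ : ℝ} {n : ℕ} (hn : 0 < n) (hh : 0 < h)
    (hF : Differentiable ℝ F) (hconv : ConvexOn ℝ Set.univ F) (hLf : 0 < Lf)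
    (hlip : ∀ x y, ‖gradient F x - gradient F y‖ ≤ Lf * ‖x - y‖) (hL : L.IsPositive)
    (hXs : L Xs = 0) (hgrad : gradient F Xs = 0) (hσ : σ ≤ 2 / LSmooth ‖L‖ Lf h β n) (x : H) :
    penalizedGap ((2 * thetaSeq n * h) ^ (-β)) F L Xs x + σ / 8 * ‖Gmap h β F L n x‖ ^ 2
      ≤ ⟪Gmap h β F L n x, x - Xs⟫ := by
  set φ := (2 * thetaSeq n * h) ^ (-β)
  have hφ : 0 < φ := Real.rpow_pos_of_pos (by rw [thetaSeq]; positivity) _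
  have hM : 0 < φ * Lf + ‖L‖ := by positivity
  have hgap := penalizedGap_add_norm_sq_div_le_inner hφ.le hF hconv hLf.le hlip hL hgrad x
  rw [map_sub, hXs, sub_zero] at hgap
  have hσM : σ / 8 ≤ 1 / (4 * (φ * Lf + ‖L‖)) := by
    have := hσ.trans (div_le_div_of_nonneg_left zero_le_two hM (add_le_LSmooth ‖L‖ Lf h β n))
    rw [le_div_iff₀ hM] at this
    rw [le_div_iff₀ (by positivity)]
    linarith
  have hG : Gmap h β F L n x = φ • gradient F x + L x := rfl
  rw [hG]
  have := mul_le_mul_of_nonneg_right hσM (sq_nonneg ‖φ • gradient F x + L x‖)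
  rw [one_div_mul_eq_div] at this
  linarith

end Lyapunov

theorem lyapunov_difference_lower_bound
    (F : H → ℝ) (hF : Differentiable ℝ F) (hconv : ConvexOn ℝ Set.univ F)
    (Lf : ℝ) (hLf : 0 < Lf)
    (hlip : ∀ x y : H, ‖gradient F x - gradient F y‖ ≤ Lf * ‖x - y‖)
    (L : H →L[ℝ] H) (hsym : ∀ x y : H, ⟪L x, y⟫ = ⟪x, L y⟫)
    (hpsd : ∀ x : H, 0 ≤ ⟪x, L x⟫)
    (lambar : ℝ) (hlam : ‖L‖ = lambar)
    (Xs : H) (hXs : L Xs = 0) (hmin : ∀ Y : H, F Xs ≤ F Y)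
    (h β : ℝ) (hh : 0 < h)
    (X Xp Z : ℕ → H) (s : ℕ → ℝ)
    (hspos : ∀ k, 1 ≤ k → 0 < s k)
    (hXp : ∀ k, 1 ≤ k → Xp k = X k - (s k / 2) • Gmap h β F L k (X k))
    (hZupd : ∀ k, 1 ≤ k → Z (k + 1) = Z k - (s k * thetaSeq k) • Gmap h β F L k (X k))
    (hXupd : ∀ k, 1 ≤ k → X (k + 1) = (thetaSeq k ^ 2 / thetaSeq (k + 1) ^ 2) • Xp k
        + (1 - thetaSeq k ^ 2 / thetaSeq (k + 1) ^ 2) • Z (k + 1))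
    (k : ℕ) (hk : 1 ≤ k)
    (hmono : s k ≤ s (k + 1))
    (hstep : s (k + 1) ≤ 2 / LSmooth lambar Lf h β (k + 1)) :
    VSeq h β F L Xs X Z s k - VSeq h β F L Xs X Z s (k + 1)
      ≥ 2 * ASeq k * qSeq h β F L Xs X s k
        + (s (k + 1) / 2) * thetaSeq (k + 1) * rSeq h β F L Xs X k := by
  subst hlam
  have hs : 0 < s k := hspos k hk
  have hs' : 0 < s (k + 1) := hspos (k + 1) (by omega)
  have hθ : 0 ≤ thetaSeq (k + 1) := by rw [thetaSeq]; positivity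
  have hgrad : gradient F Xs = 0 := by
    have hloc : IsLocalMin F Xs := Filter.Eventually.of_forall hmin
    rw [gradient, hloc.fderiv_eq_zero, map_zero]
  have hL : L.IsPositive :=
    ⟨hsym, fun x => by simpa [ContinuousLinearMap.reApplyInnerSelf, real_inner_comm] using hpsd x⟩
  have hgap := penalizedGap_add_le_inner_Gmap (by omega) hh hF hconv hLf hlip hL hXs hgrad hstep
    (X (k + 1))
  have hφ : 0 ≤ (2 * thetaSeq (k + 1) * h) ^ (-β) := Real.rpow_nonneg (by positivity) _
  have hE := penalizedGap_nonneg hφ hmin hL (X (k + 1))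
  have hr : rSeq h β F L Xs X k = 0 := by simp [rSeq, hgrad]
  rw [ge_iff_le, hr, mul_zero, add_zero, VSeq_sub_VSeq_succ hs'.ne' (hZupd (k + 1) (by omega))
    (by rw [hXupd k hk, hXp k hk])]
  have hZterm := mul_nonneg (sub_nonneg.2 (one_div_le_one_div_of_le hs hmono))
    (sq_nonneg ‖Z (k + 1) - Xs‖)
  have hgterm := mul_nonneg (mul_nonneg (ASeq_nonneg k) (sub_nonneg.2 hmono))
    (sq_nonneg ‖Gmap h β F L k (X k)‖)
  have hcross₁ := mul_le_mul_of_nonneg_left hgap hθ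
  have hcross₂ := mul_le_mul_of_nonneg_right (ASeq_succ_sub_le_thetaSeq k) hE
  have hcoef := mul_le_mul_of_nonneg_right (thetaSeq_sq_le k)
    (mul_nonneg hs'.le (sq_nonneg ‖Gmap h β F L (k + 1) (X (k + 1))‖))
  linarith
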